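/- For a solution of the canonical Hamiltonian system with the genus-3 reduced Hamiltonian H = F_1^2 + 2F_0F_2, the following relation holds along the flow: ȧ_1 + ȧ_3 + ȧ_6 = 2·[a_6(κ_3−κ_1) + a_3(κ_1−κ_6) + a_1(κ_6−κ_3)] / [(a_1−a_3)(a_1−a_6)(a_3−a_6)], i.e. ∂H/∂κ_1 + ∂H/∂κ_3 + ∂H/∂κ_6 = 2F_2. -/

import Mathlib

/-!
The interpolation coefficients `F₀, F₁, F₂` are linear in `κ`, so the sum of the three
`κ`-partials of `H = F₁² + 2F₀F₂` is its derivative in the direction `(1, 1, 1)`. Shifting every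
`κᵢ` by `t` shifts the interpolating polynomial by the constant `t`: `F₀` moves at unit speed and
`F₁, F₂` stay fixed, so the derivative is `2F₂`.
-/

noncomputable section

def F0g3 (a1 a3 a6 k1 k3 k6 : ℂ) : ℂ :=
  (a1 * a6 * (a6 - a1) * k3 + a3 ^ 2 * (a6 * k1 - a1 * k6) + a3 * (a1 ^ 2 * k6 - a6 ^ 2 * k1)) /
    ((a1 - a3) * (a1 - a6) * (a3 - a6))

def F1g3 (a1 a3 a6 k1 k3 k6 : ℂ) : ℂ :=
  (a6 ^ 2 * (k3 - k1) + a3 ^ 2 * (k1 - k6) + a1 ^ 2 * (k6 - k3)) /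
    ((a1 - a3) * (a1 - a6) * (a3 - a6))

def F2g3 (a1 a3 a6 k1 k3 k6 : ℂ) : ℂ :=
  (a6 * (k3 - k1) + a3 * (k1 - k6) + a1 * (k6 - k3)) /
    ((a1 - a3) * (a1 - a6) * (a3 - a6))

/-- The genus-3 reduced Hamiltonian `H = F₁² + 2F₀F₂`. -/
def Hg3 (a1 a3 a6 k1 k3 k6 : ℂ) : ℂ :=
  F1g3 a1 a3 a6 k1 k3 k6 ^ 2 + 2 * F0g3 a1 a3 a6 k1 k3 k6 * F2g3 a1 a3 a6 k1 k3 k6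

section LinearForm

variable {𝕜 : Type*} [NontriviallyNormedField 𝕜]

def IsLinearForm₃ (F : 𝕜 → 𝕜 → 𝕜 → 𝕜) : Prop :=
  ∀ x y z, F x y z = x * F 1 0 0 + y * F 0 1 0 + z * F 0 0 1

namespace IsLinearForm₃

variable {F : 𝕜 → 𝕜 → 𝕜 → 𝕜} (hF : IsLinearForm₃ F)
include hF

theorem apply_one_one_one : F 1 1 1 = F 1 0 0 + F 0 1 0 + F 0 0 1 := by
  simpa using hF 1 1 1

theorem hasDerivAt_fst (x y z : 𝕜) : HasDerivAt (fun t => F t y z) (F 1 0 0) x := by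
  simp_rw [hF _ y z]
  exact ((hasDerivAt_mul_const (F 1 0 0)).add_const (y * F 0 1 0)).add_const (z * F 0 0 1)

theorem hasDerivAt_snd (x y z : 𝕜) : HasDerivAt (fun t => F x t z) (F 0 1 0) y := by
  simp_rw [hF x _ z]
  exact ((hasDerivAt_mul_const (F 0 1 0)).const_add (x * F 1 0 0)).add_const (z * F 0 0 1)

theorem hasDerivAt_thd (x y z : 𝕜) : HasDerivAt (fun t => F x y t) (F 0 0 1) z := by
  simp_rw [hF x y _]
  exact (hasDerivAt_mul_const (F 0 0 1)).const_add (x * F 1 0 0 + y * F 0 1 0)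

end IsLinearForm₃

theorem HasDerivAt.sq_add_two_mul {f g h : 𝕜 → 𝕜} {f' g' h' x : 𝕜} (hf : HasDerivAt f f' x)
    (hg : HasDerivAt g g' x) (hh : HasDerivAt h h' x) :
    HasDerivAt (fun t => f t ^ 2 + 2 * g t * h t) (2 * f x * f' + 2 * (g' * h x + g x * h')) x := by
  simpa [mul_assoc] using (hf.fun_pow 2).fun_add ((hg.fun_mul hh).const_mul 2)

theorem sum_partial_derivs_sq_add_two_mul {F₀ F₁ F₂ : 𝕜 → 𝕜 → 𝕜 → 𝕜}
    (h₀ : IsLinearForm₃ F₀) (h₁ : IsLinearForm₃ F₁) (h₂ : IsLinearForm₃ F₂) (x y z : 𝕜) :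
    deriv (fun t => F₁ t y z ^ 2 + 2 * F₀ t y z * F₂ t y z) x
      + deriv (fun t => F₁ x t z ^ 2 + 2 * F₀ x t z * F₂ x t z) y
      + deriv (fun t => F₁ x y t ^ 2 + 2 * F₀ x y t * F₂ x y t) z
    = 2 * F₁ x y z * F₁ 1 1 1 + 2 * (F₀ 1 1 1 * F₂ x y z + F₀ x y z * F₂ 1 1 1) := by
  rw [((h₁.hasDerivAt_fst x y z).sq_add_two_mul (h₀.hasDerivAt_fst x y z)
      (h₂.hasDerivAt_fst x y z)).deriv,
    ((h₁.hasDerivAt_snd x y z).sq_add_two_mul (h₀.hasDerivAt_snd x y z)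
      (h₂.hasDerivAt_snd x y z)).deriv,
    ((h₁.hasDerivAt_thd x y z).sq_add_two_mul (h₀.hasDerivAt_thd x y z)
      (h₂.hasDerivAt_thd x y z)).deriv,
    h₀.apply_one_one_one, h₁.apply_one_one_one, h₂.apply_one_one_one]
  ring

end LinearForm

section Genus3

variable (a1 a3 a6 : ℂ)

theorem isLinearForm₃_F0g3 : IsLinearForm₃ (F0g3 a1 a3 a6) := by
  intro x y z; simp only [F0g3]; ring

theorem isLinearForm₃_F1g3 : IsLinearForm₃ (F1g3 a1 a3 a6) := by
  intro x y z; simp only [F1g3]; ring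

theorem isLinearForm₃_F2g3 : IsLinearForm₃ (F2g3 a1 a3 a6) := by
  intro x y z; simp only [F2g3]; ring

-- `(F₀, F₁, F₂)(1, 1, 1)` are the coefficients of the interpolant of the constant `1`.
theorem F0g3_one_one_one (h13 : a1 ≠ a3) (h16 : a1 ≠ a6) (h36 : a3 ≠ a6) :
    F0g3 a1 a3 a6 1 1 1 = 1 := by
  have hD : (a1 - a3) * (a1 - a6) * (a3 - a6) ≠ 0 := by
    simp [sub_ne_zero, h13, h16, h36]
  rw [F0g3, div_eq_one_iff_eq hD]
  ring

theorem F1g3_one_one_one : F1g3 a1 a3 a6 1 1 1 = 0 := by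
  simp [F1g3]

theorem F2g3_one_one_one : F2g3 a1 a3 a6 1 1 1 = 0 := by
  simp [F2g3]

end Genus3

/-- `∂H/∂κ₁ + ∂H/∂κ₃ + ∂H/∂κ₆ = 2F₂`, i.e. along the canonical flow
`ȧ₁ + ȧ₃ + ȧ₆ = 2[a₆(κ₃−κ₁)+a₃(κ₁−κ₆)+a₁(κ₆−κ₃)]/D`. -/
theorem genus3_sum_of_velocities (a1 a3 a6 k1 k3 k6 : ℂ)
    (h13 : a1 ≠ a3) (h16 : a1 ≠ a6) (h36 : a3 ≠ a6) :
    deriv (fun t => Hg3 a1 a3 a6 t k3 k6) k1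
      + deriv (fun t => Hg3 a1 a3 a6 k1 t k6) k3
      + deriv (fun t => Hg3 a1 a3 a6 k1 k3 t) k6
    = 2 * (a6 * (k3 - k1) + a3 * (k1 - k6) + a1 * (k6 - k3)) /
        ((a1 - a3) * (a1 - a6) * (a3 - a6)) := by
  simp only [Hg3]
  rw [sum_partial_derivs_sq_add_two_mul (isLinearForm₃_F0g3 a1 a3 a6)
    (isLinearForm₃_F1g3 a1 a3 a6) (isLinearForm₃_F2g3 a1 a3 a6),
    F0g3_one_one_one a1 a3 a6 h13 h16 h36, F1g3_one_one_one, F2g3_one_one_one, F2g3]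
  ring
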